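/- arXiv:2411.00127 — 7 statements merged into one kernel-verified Lean document; each statement's English description precedes it below -/
import Mathlib

section
/- Let Λ : ℍ → ℍ be a nonzero ℝ-linear map and let g, h ∈ 𝕊. Then A_Λ(h,g) ≤ ‖Λ‖², and equality A_Λ(h,g) = ‖Λ‖² holds if and only if Λ is complex linear of type (g,h). -/
noncomputable section

open Quaternion Classical

/-- The imaginary unit `i`. -/
def qi : ℍ[ℝ] := ⟨0, 1, 0, 0⟩
/-- The imaginary unit `j`. -/
def qj : ℍ[ℝ] := ⟨0, 0, 1, 0⟩
/-- The imaginary unit `k`. -/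
def qk : ℍ[ℝ] := ⟨0, 0, 0, 1⟩

/-- The 2-sphere of quaternionic imaginary units. -/
def sph : Set ℍ[ℝ] := {x | x ^ 2 = -1}

/-- The real scalar product `⟨x, y⟩ = Re (x * ȳ)` on `ℍ`. -/
def qip (x y : ℍ[ℝ]) : ℝ := (x * star y).re

/-- `‖Λ‖²`, the squared norm of a real linear map `Λ : ℍ → ℍ`. -/
def normSqL (Λ : ℍ[ℝ] →ₗ[ℝ] ℍ[ℝ]) : ℝ :=
  (1 / 4) * (normSq (Λ 1) + normSq (Λ qi) + normSq (Λ qj) + normSq (Λ qk))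

/-- The bilinear expression `A_Λ(p, q) = ⟨R_p ∘ Λ, Λ ∘ L_q⟩`. -/
def Aform (Λ : ℍ[ℝ] →ₗ[ℝ] ℍ[ℝ]) (p q : ℍ[ℝ]) : ℝ :=
  (1 / 4) * (qip (Λ 1 * p) (Λ (q * 1)) + qip (Λ qi * p) (Λ (q * qi))
    + qip (Λ qj * p) (Λ (q * qj)) + qip (Λ qk * p) (Λ (q * qk)))

/-- The trace of the bilinear form `A_Λ` on `Im ℍ`. -/
def trA (Λ : ℍ[ℝ] →ₗ[ℝ] ℍ[ℝ]) : ℝ := Aform Λ qi qi + Aform Λ qj qj + Aform Λ qk qk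

/-- The bilinear form `M_Λ(p,q) = (1/2) tr(A_Λ) ⟨p,q⟩ - (1/2) A_Λ(p,q)`. -/
def Mform (Λ : ℍ[ℝ] →ₗ[ℝ] ℍ[ℝ]) (p q : ℍ[ℝ]) : ℝ :=
  (1 / 2) * trA Λ * qip p q - (1 / 2) * Aform Λ p q

/-- `Λ` is complex linear of type `(g, h)` if `Λ(g x) = Λ(x) h` for all `x`. -/
def IsCLType (Λ : ℍ[ℝ] →ₗ[ℝ] ℍ[ℝ]) (g h : ℍ[ℝ]) : Prop := ∀ x, Λ (g * x) = Λ x * h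

/-- `Λ` is regular (right Fueter-regular). -/
def IsReg (Λ : ℍ[ℝ] →ₗ[ℝ] ℍ[ℝ]) : Prop :=
  Λ 1 * 1 + Λ qi * qi + Λ qj * qj + Λ qk * qk = 0

/-- The antiautomorphism-type map `θ̄_p(x) = p x̄ p⁻¹` as a real linear map. -/
def thetaBar (p : ℍ[ℝ]) : ℍ[ℝ] →ₗ[ℝ] ℍ[ℝ] where
  toFun x := p * star x * p⁻¹
  map_add' x y := by simp [star_add, mul_add, add_mul]
  map_smul' r x := by simp [mul_smul_comm, smul_mul_assoc]

/-- Left multiplication by a quaternion, as a real linear map. -/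
def lmul (a : ℍ[ℝ]) : ℍ[ℝ] →ₗ[ℝ] ℍ[ℝ] := LinearMap.mulLeft ℝ a

/-- The size `s(Λ)` of a (regular) real linear map: the minimal number of nonzero
coefficients `λ₁, λ₂, λ₃` in a decomposition `Λ = λ₁ θ̄_{e₁} + λ₂ θ̄_{e₂} + λ₃ θ̄_{e₃}`,
over all triples of pairwise orthogonal imaginary units `e₁, e₂, e₃`. -/
def qsize (Λ : ℍ[ℝ] →ₗ[ℝ] ℍ[ℝ]) : ℕ :=
  sInf { n | ∃ e₁ e₂ e₃ l₁ l₂ l₃ : ℍ[ℝ],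
    e₁ ∈ sph ∧ e₂ ∈ sph ∧ e₃ ∈ sph ∧
    qip e₁ e₂ = 0 ∧ qip e₁ e₃ = 0 ∧ qip e₂ e₃ = 0 ∧
    Λ = (lmul l₁).comp (thetaBar e₁) + (lmul l₂).comp (thetaBar e₂)
        + (lmul l₃).comp (thetaBar e₃) ∧
    n = (if l₁ = 0 then 0 else 1) + (if l₂ = 0 then 0 else 1) + (if l₃ = 0 then 0 else 1) }

/-- The 3×3 matrix of `M_Λ` with respect to the basis `(i, j, k)` of `Im ℍ`. -/
def Mmat (Λ : ℍ[ℝ] →ₗ[ℝ] ℍ[ℝ]) : Matrix (Fin 3) (Fin 3) ℝ :=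
  Matrix.of fun α β => Mform Λ (![qi, qj, qk] α) (![qi, qj, qk] β)

/-- The basis `(1, i, j, k)` of `ℍ` over `ℝ`. -/
def qBasis : Module.Basis (Fin 4) ℝ ℍ[ℝ] := QuaternionAlgebra.basisOneIJK (-1) 0 (-1)

/-- The adjugate `Λ^adjg` of a real linear map `Λ : ℍ → ℍ`: the linear map whose matrix
with respect to the basis `(1, i, j, k)` is the adjugate of the matrix of `Λ`. -/
def adjg (Λ : ℍ[ℝ] →ₗ[ℝ] ℍ[ℝ]) : ℍ[ℝ] →ₗ[ℝ] ℍ[ℝ] :=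
  Matrix.toLin qBasis qBasis (Matrix.adjugate (LinearMap.toMatrix qBasis qBasis Λ))

/-- The embedding `ℂ → ℍ`, `x + √-1 y ↦ x + y i`. -/
def iotaC (z : ℂ) : ℍ[ℝ] := ⟨z.re, z.im, 0, 0⟩

/-- The map `L_Λ : Im ℍ → Im ℍ` representing `A_Λ`: `⟨p, L_Λ(q)⟩ = A_Λ(p, q)`. -/
def LLam (Λ : ℍ[ℝ] →ₗ[ℝ] ℍ[ℝ]) (q : ℍ[ℝ]) : ℍ[ℝ] :=
  Aform Λ qi q • qi + Aform Λ qj q • qj + Aform Λ qk q • qk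

/-- The quadratic form `Q_Λ(q) = |L_Λ(q)|²`. -/
def QLam (Λ : ℍ[ℝ] →ₗ[ℝ] ℍ[ℝ]) (q : ℍ[ℝ]) : ℝ := normSq (LLam Λ q)

/-! Left multiplication by `g` is a similarity of ratio `|g|`, so `‖Λ ∘ L_g‖² = |g|² ‖Λ‖²`;
likewise `‖R_h ∘ Λ‖² = |h|² ‖Λ‖²`. Expanding `‖Λ ∘ L_g - R_h ∘ Λ‖²` therefore gives
`2 ‖Λ‖² - 2 A_Λ(h, g)` for unit `g, h`, which is nonnegative and vanishes exactly when
`Λ ∘ L_g = R_h ∘ Λ`. -/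

theorem quaternion_eq_re_add_ijk (x : ℍ[ℝ]) :
    x = x.re • (1 : ℍ[ℝ]) + x.imI • qi + x.imJ • qj + x.imK • qk := by
  ext <;> simp [Quaternion.re_smul] <;> simp [qi, qj, qk]

theorem map_eq_re_add_ijk {M : Type*} [AddCommMonoid M] [Module ℝ M] (f : ℍ[ℝ] →ₗ[ℝ] M)
    (x : ℍ[ℝ]) : f x = x.re • f 1 + x.imI • f qi + x.imJ • f qj + x.imK • f qk := by
  conv_lhs => rw [quaternion_eq_re_add_ijk x]
  simp only [map_add, map_smul]

theorem linearMap_ext_one_ijk {M : Type*} [AddCommMonoid M] [Module ℝ M]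
    {f₁ f₂ : ℍ[ℝ] →ₗ[ℝ] M} (h1 : f₁ 1 = f₂ 1) (hi : f₁ qi = f₂ qi) (hj : f₁ qj = f₂ qj)
    (hk : f₁ qk = f₂ qk) : f₁ = f₂ := by
  ext x
  rw [map_eq_re_add_ijk f₁, map_eq_re_add_ijk f₂, h1, hi, hj, hk]

theorem isCLType_iff_comp_eq (Λ : ℍ[ℝ] →ₗ[ℝ] ℍ[ℝ]) (g h : ℍ[ℝ]) :
    IsCLType Λ g h ↔ Λ ∘ₗ lmul g = LinearMap.mulRight ℝ h ∘ₗ Λ :=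
  ⟨fun hΛ => LinearMap.ext hΛ, fun hΛ x => LinearMap.congr_fun hΛ x⟩

theorem normSqL_nonneg (Λ : ℍ[ℝ] →ₗ[ℝ] ℍ[ℝ]) : 0 ≤ normSqL Λ := by
  unfold normSqL
  have := normSq_nonneg (a := Λ 1)
  have := normSq_nonneg (a := Λ qi)
  have := normSq_nonneg (a := Λ qj)
  have := normSq_nonneg (a := Λ qk)
  positivity

theorem normSqL_eq_zero_iff (Λ : ℍ[ℝ] →ₗ[ℝ] ℍ[ℝ]) : normSqL Λ = 0 ↔ Λ = 0 := by
  refine ⟨fun h0 => ?_, fun h0 => by simp [normSqL, h0]⟩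
  have h1 := normSq_nonneg (a := Λ 1)
  have hi := normSq_nonneg (a := Λ qi)
  have hj := normSq_nonneg (a := Λ qj)
  have hk := normSq_nonneg (a := Λ qk)
  unfold normSqL at h0
  refine linearMap_ext_one_ijk ?_ ?_ ?_ ?_ <;>
    rw [LinearMap.zero_apply, ← normSq_eq_zero] <;> linarith

theorem normSq_sub_mul (a b c : ℍ[ℝ]) :
    normSq (a - b * c) = normSq a + normSq b * normSq c - 2 * qip (b * c) a := by
  simp only [qip, normSq_def', re_mul, imI_mul, imJ_mul, imK_mul, re_sub, imI_sub, imJ_sub,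
    imK_sub, re_star, imI_star, imJ_star, imK_star]
  ring

theorem normSqL_comp_lmul (Λ : ℍ[ℝ] →ₗ[ℝ] ℍ[ℝ]) (g : ℍ[ℝ]) :
    normSqL (Λ ∘ₗ lmul g) = normSq g * normSqL Λ := by
  simp only [normSqL, LinearMap.comp_apply, lmul, LinearMap.mulLeft_apply]
  rw [map_eq_re_add_ijk Λ (g * 1), map_eq_re_add_ijk Λ (g * qi), map_eq_re_add_ijk Λ (g * qj),
    map_eq_re_add_ijk Λ (g * qk)]
  simp only [normSq_def', re_mul, imI_mul, imJ_mul, imK_mul, re_add, imI_add, imJ_add, imK_add,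
    re_smul, imI_smul, imJ_smul, imK_smul, re_one, imI_one, imJ_one, imK_one, smul_eq_mul]
  simp only [qi, qj, qk]
  ring

theorem normSqL_comp_lmul_sub_mulRight_comp (Λ : ℍ[ℝ] →ₗ[ℝ] ℍ[ℝ]) (g h : ℍ[ℝ]) :
    normSqL (Λ ∘ₗ lmul g - LinearMap.mulRight ℝ h ∘ₗ Λ)
      = normSq g * normSqL Λ + normSq h * normSqL Λ - 2 * Aform Λ h g := by
  have hg := normSqL_comp_lmul Λ g
  simp only [normSqL, Aform, LinearMap.sub_apply, LinearMap.comp_apply, lmul,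
    LinearMap.mulLeft_apply, LinearMap.mulRight_apply, normSq_sub_mul] at hg ⊢
  linarith

theorem normSq_eq_one_of_mem_sph {g : ℍ[ℝ]} (hg : g ∈ sph) : normSq g = 1 := by
  have hsq : normSq g ^ 2 = 1 := by
    rw [← map_pow, hg, normSq_neg, map_one]
  nlinarith [normSq_nonneg (a := g)]

theorem stmt0_general (Λ : ℍ[ℝ] →ₗ[ℝ] ℍ[ℝ]) (g h : ℍ[ℝ])
    (hg : g ∈ sph) (hh : h ∈ sph) :
    Aform Λ h g ≤ normSqL Λ ∧ (Aform Λ h g = normSqL Λ ↔ IsCLType Λ g h) := by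
  set D := Λ ∘ₗ lmul g - LinearMap.mulRight ℝ h ∘ₗ Λ
  have hD : normSqL D = 2 * (normSqL Λ - Aform Λ h g) := by
    rw [normSqL_comp_lmul_sub_mulRight_comp, normSq_eq_one_of_mem_sph hg,
      normSq_eq_one_of_mem_sph hh]
    ring
  refine ⟨by linarith [normSqL_nonneg D], ?_⟩
  rw [isCLType_iff_comp_eq, ← sub_eq_zero (a := Λ ∘ₗ lmul g), ← normSqL_eq_zero_iff, hD]
  constructor <;> intro h0 <;> linarith

/-- For a nonzero real linear map `Λ : ℍ → ℍ` and `g, h ∈ 𝕊`, `A_Λ(h,g) ≤ ‖Λ‖²`, with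
equality if and only if `Λ` is complex linear of type `(g,h)`. -/
theorem stmt0 (Λ : ℍ[ℝ] →ₗ[ℝ] ℍ[ℝ]) (hΛ : Λ ≠ 0) (g h : ℍ[ℝ])
    (hg : g ∈ sph) (hh : h ∈ sph) :
    Aform Λ h g ≤ normSqL Λ ∧ (Aform Λ h g = normSqL Λ ↔ IsCLType Λ g h) :=
  stmt0_general Λ g h hg hh

end
end

section
/- For every ℝ-linear map Λ : ℍ → ℍ, the trace of the bilinear form A_Λ satisfies tr(A_Λ) = ‖Λ‖² − (1/4)·|Λ(1)·1 + Λ(i)·i + Λ(j)·j + Λ(k)·k|². -/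
noncomputable section

open Quaternion Classical

/-
With `v_e := Λ(e)·e` for `e ∈ {1, i, j, k}`, the right-hand side is `-(1/2)∑_{e < e'} ⟨v_e, v_e'⟩`,
since `|v_e| = |Λ(e)|`. On the left, the twelve terms `⟨Λ(e)·q, Λ(q·e)⟩` pair off into six
doubled ones, because `⟨x·u, y⟩ = -⟨y·u, x⟩` for imaginary `u`; moving units across the scalar
product, `⟨x·u, y·w⟩ = ⟨x·u·w̄, y⟩`, identifies each of them with one `-⟨v_e, v_e'⟩`.
-/

lemma qi_mul_qi : qi * qi = -1 := by
  ext <;> simp [re_mul, imI_mul, imJ_mul, imK_mul] <;> simp [qi]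
lemma qj_mul_qj : qj * qj = -1 := by
  ext <;> simp [re_mul, imI_mul, imJ_mul, imK_mul] <;> simp [qj]
lemma qk_mul_qk : qk * qk = -1 := by
  ext <;> simp [re_mul, imI_mul, imJ_mul, imK_mul] <;> simp [qk]
lemma qi_mul_qj : qi * qj = qk := by
  ext <;> simp [re_mul, imI_mul, imJ_mul, imK_mul] <;> simp [qi, qj, qk]
lemma qj_mul_qi : qj * qi = -qk := by
  ext <;> simp [re_mul, imI_mul, imJ_mul, imK_mul] <;> simp [qi, qj, qk]
lemma qj_mul_qk : qj * qk = qi := by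
  ext <;> simp [re_mul, imI_mul, imJ_mul, imK_mul] <;> simp [qi, qj, qk]
lemma qk_mul_qj : qk * qj = -qi := by
  ext <;> simp [re_mul, imI_mul, imJ_mul, imK_mul] <;> simp [qi, qj, qk]
lemma qk_mul_qi : qk * qi = qj := by
  ext <;> simp [re_mul, imI_mul, imJ_mul, imK_mul] <;> simp [qi, qj, qk]
lemma qi_mul_qk : qi * qk = -qj := by
  ext <;> simp [re_mul, imI_mul, imJ_mul, imK_mul] <;> simp [qi, qj, qk]

lemma star_qi : star qi = -qi := star_eq_neg.2 rfl
lemma star_qj : star qj = -qj := star_eq_neg.2 rfl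
lemma star_qk : star qk = -qk := star_eq_neg.2 rfl

lemma normSq_qi : normSq qi = 1 := by rw [normSq_def']; simp [qi]
lemma normSq_qj : normSq qj = 1 := by rw [normSq_def']; simp [qj]
lemma normSq_qk : normSq qk = 1 := by rw [normSq_def']; simp [qk]

section qip

variable (x y u : ℍ[ℝ])

lemma qip_comm : qip x y = qip y x := by
  rw [qip, qip, ← re_star, star_mul, star_star]

lemma qip_neg_left : qip (-x) y = -qip x y := by
  simp [qip]

lemma qip_neg_right : qip x (-y) = -qip x y := by
  simp [qip]

lemma qip_add_left : qip (x + u) y = qip x y + qip u y := by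
  simp [qip, add_mul]

lemma qip_mul_right : qip (x * u) y = qip x (y * star u) := by
  simp [qip, star_mul, mul_assoc]

lemma qip_mul_of_star_eq_neg {u : ℍ[ℝ]} (hu : star u = -u) :
    qip (x * u) y = -qip (y * u) x := by
  rw [qip_mul_right, hu, mul_neg, qip_neg_right, qip_comm]

lemma normSq_add_qip : normSq (x + y) = normSq x + normSq y + 2 * qip x y :=
  normSq_add x y

end qip

lemma trA_eq_half_sum_qip (Λ : ℍ[ℝ] →ₗ[ℝ] ℍ[ℝ]) :
    trA Λ = (1 / 2) * (qip (Λ 1 * qi) (Λ qi) + qip (Λ qj * qi) (Λ qk) + qip (Λ 1 * qj) (Λ qj)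
      - qip (Λ qi * qj) (Λ qk) + qip (Λ 1 * qk) (Λ qk) + qip (Λ qi * qk) (Λ qj)) := by
  have pair (x y u : ℍ[ℝ]) (hu : star u = -u) : qip (y * u) (-x) = qip (x * u) y := by
    rw [qip_neg_right, qip_mul_of_star_eq_neg _ _ hu, neg_neg]
  simp only [trA, Aform, mul_one, qi_mul_qi, qj_mul_qj, qk_mul_qk, qi_mul_qj, qj_mul_qi,
    qj_mul_qk, qk_mul_qj, qk_mul_qi, qi_mul_qk, map_neg,
    pair _ _ _ star_qi, pair _ _ _ star_qj, pair _ _ _ star_qk,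
    qip_mul_of_star_eq_neg (Λ qk) (Λ qi) star_qj]
  ring

lemma normSq_sum_mul_basis (a b c d : ℍ[ℝ]) :
    normSq (a * 1 + b * qi + c * qj + d * qk)
      = normSq a + normSq b + normSq c + normSq d
        - 2 * (qip (a * qi) b + qip (c * qi) d + qip (a * qj) c
          - qip (b * qj) d + qip (a * qk) d + qip (b * qk) c) := by
  have cross (x y u w : ℍ[ℝ]) : qip (x * u) (y * w) = qip (x * (u * star w)) y := by
    rw [qip_mul_right, qip_mul_right, star_mul, star_star, mul_assoc]
  simp only [normSq_add_qip, qip_add_left, mul_one, map_mul, normSq_qi, normSq_qj, normSq_qk,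
    qip_mul_right a, cross, star_qi, star_qj, star_qk, mul_neg, neg_neg, qip_neg_left,
    qip_neg_right, qi_mul_qj, qi_mul_qk, qj_mul_qk]
  ring

/-- `tr(A_Λ) = ‖Λ‖² − (1/4)|Λ(1)·1 + Λ(i)·i + Λ(j)·j + Λ(k)·k|²`. -/
theorem stmt2 (Λ : ℍ[ℝ] →ₗ[ℝ] ℍ[ℝ]) :
    trA Λ = normSqL Λ
      - (1 / 4) * normSq (Λ 1 * 1 + Λ qi * qi + Λ qj * qj + Λ qk * qk) := by
  rw [trA_eq_half_sum_qip, normSq_sum_mul_basis, normSqL]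
  ring

end
end

section
/- An ℝ-linear map Λ : ℍ → ℍ is regular if and only if tr(A_Λ) = ‖Λ‖². -/
noncomputable section

open Quaternion Classical

lemma normSqL_sub_trA (Λ : ℍ[ℝ] →ₗ[ℝ] ℍ[ℝ]) :
    normSqL Λ - trA Λ = (1 / 4) * normSq (Λ 1 + Λ qi * qi + Λ qj * qj + Λ qk * qk) := by
  simp only [trA, Aform, normSqL, qip, mul_one, qi_mul_qi, qi_mul_qj, qi_mul_qk, qj_mul_qi,
    qj_mul_qj, qj_mul_qk, qk_mul_qi, qk_mul_qj, qk_mul_qk, map_neg, normSq_def', re_mul, imI_mul,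
    imJ_mul, imK_mul, re_add, imI_add, imJ_add, imK_add, re_neg, imI_neg, imJ_neg, imK_neg,
    re_star, imI_star, imJ_star, imK_star]
  simp only [qi, qj, qk]
  ring

/-- A real linear map `Λ : ℍ → ℍ` is regular if and only if `tr(A_Λ) = ‖Λ‖²`. -/
theorem stmt3 (Λ : ℍ[ℝ] →ₗ[ℝ] ℍ[ℝ]) : IsReg Λ ↔ trA Λ = normSqL Λ := by
  have defect := normSqL_sub_trA Λ
  rw [IsReg, mul_one, ← normSq_eq_zero]
  constructor <;> intro h <;> linarith

end
end

section
/- Let Λ : ℍ → ℍ be ℝ-linear and let e₁, e₂, e₃ ∈ 𝕊 be pairwise orthogonal. The following are equivalent: (1) Λ is regular, i.e., Λ(1)·1 + Λ(i)·i + Λ(j)·j + Λ(k)·k = 0; (2) Λ(x) = −(Λ(e₁·x)·e₁ + Λ(e₂·x)·e₂ + Λ(e₃·x)·e₃) for all x ∈ ℍ; (3) Λ(x) + Λ(e₁·x)·e₁ + Λ(e₂·x)·e₂ + Λ(e₃·x)·e₃ = 0 for all x ∈ ℍ; (4) Λ(1) + Λ(e₁)·e₁ + Λ(e₂)·e₂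 + Λ(e₃)·e₃ = 0. -/
noncomputable section

open Quaternion Classical

/-! For fixed `x`, the quaternion `Λ x + Λ(e₁ x) e₁ + Λ(e₂ x) e₂ + Λ(e₃ x) e₃` is the trace
`∑ b, B b b` of the real bilinear map `B u v = Λ(u x) v` over the orthonormal basis
`(1, e₁, e₂, e₃)` of `ℍ`, and such a trace does not depend on the orthonormal basis. For the
basis `(1, i, j, k)` a direct computation gives `(Λ 1 + Λ i · i + Λ j · j + Λ k · k) x̄`, so each
of the four conditions says that this quaternion vanishes. -/

open scoped InnerProductSpace

theorem OrthonormalBasis.sum_apply_self_eq {ι κ E M : Type*} [Fintype ι] [Fintype κ]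
    [NormedAddCommGroup E] [InnerProductSpace ℝ E] [AddCommGroup M] [Module ℝ M]
    (B : E →ₗ[ℝ] E →ₗ[ℝ] M) (b : OrthonormalBasis ι ℝ E) (c : OrthonormalBasis κ ℝ E) :
    ∑ i, B (b i) (b i) = ∑ k, B (c k) (c k) := by
  calc ∑ i, B (b i) (b i) = ∑ i, B (b i) (∑ k, ⟪c k, b i⟫_ℝ • c k) := by
        simp only [c.sum_repr']
    _ = ∑ k, B (∑ i, ⟪b i, c k⟫_ℝ • b i) (c k) := by
        simp only [map_sum, map_smul, LinearMap.sum_apply, LinearMap.smul_apply, real_inner_comm]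
        exact Finset.sum_comm
    _ = ∑ k, B (c k) (c k) := by simp only [b.sum_repr']

theorem re_eq_zero_and_normSq_eq_one_of_mem_sph {e : ℍ[ℝ]} (he : e ∈ sph) :
    e.re = 0 ∧ normSq e = 1 := by
  have h : e * e = -1 := by rw [← sq]; exact he
  have hre := congrArg QuaternionAlgebra.re h
  have hI := congrArg QuaternionAlgebra.imI h
  have hJ := congrArg QuaternionAlgebra.imJ h
  have hK := congrArg QuaternionAlgebra.imK h
  simp only [re_mul, re_neg, re_one, imI_mul, imI_neg, imI_one, neg_zero, imJ_mul, imJ_neg,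
    imJ_one, imK_mul, imK_neg, imK_one] at hre hI hJ hK
  have h0 : e.re = 0 := by
    nlinarith [sq_nonneg e.re, sq_nonneg e.imI, sq_nonneg e.imJ, sq_nonneg e.imK]
  refine ⟨h0, ?_⟩
  rw [Quaternion.normSq_def']
  nlinarith

theorem orthonormal_one_of_mem_sph {e₁ e₂ e₃ : ℍ[ℝ]}
    (h1 : e₁ ∈ sph) (h2 : e₂ ∈ sph) (h3 : e₃ ∈ sph)
    (h12 : qip e₁ e₂ = 0) (h13 : qip e₁ e₃ = 0) (h23 : qip e₂ e₃ = 0) :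
    Orthonormal ℝ ![1, e₁, e₂, e₃] := by
  have unit : ∀ e ∈ sph, ‖e‖ = 1 ∧ ⟪(1 : ℍ[ℝ]), e⟫_ℝ = 0 ∧ ⟪e, 1⟫_ℝ = 0 := fun e he => by
    obtain ⟨hre, hn⟩ := re_eq_zero_and_normSq_eq_one_of_mem_sph he
    refine ⟨?_, by simp [Quaternion.inner_def, hre], by simp [Quaternion.inner_def, hre]⟩
    nlinarith [norm_nonneg e, Quaternion.normSq_eq_norm_mul_self e]
  rw [qip, ← Quaternion.inner_def] at h12 h13 h23
  obtain ⟨n1, o1, o1'⟩ := unit e₁ h1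
  obtain ⟨n2, o2, o2'⟩ := unit e₂ h2
  obtain ⟨n3, o3, o3'⟩ := unit e₃ h3
  rw [orthonormal_iff_ite]
  intro a b
  fin_cases a <;> fin_cases b <;> simp [real_inner_comm, *]

def frameBasis {e₁ e₂ e₃ : ℍ[ℝ]} (h1 : e₁ ∈ sph) (h2 : e₂ ∈ sph) (h3 : e₃ ∈ sph)
    (h12 : qip e₁ e₂ = 0) (h13 : qip e₁ e₃ = 0) (h23 : qip e₂ e₃ = 0) :
    OrthonormalBasis (Fin 4) ℝ ℍ[ℝ] :=
  have hon := orthonormal_one_of_mem_sph h1 h2 h3 h12 h13 h23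
  OrthonormalBasis.mk hon
    (hon.linearIndependent.span_eq_top_of_card_eq_finrank'
      (by simp [Quaternion.finrank_eq_four])).ge

theorem qi_qj_qk_orthogonal_units :
    qi ∈ sph ∧ qj ∈ sph ∧ qk ∈ sph ∧ qip qi qj = 0 ∧ qip qi qk = 0 ∧ qip qj qk = 0 := by
  refine ⟨?_, ?_, ?_, ?_, ?_, ?_⟩ <;>
    simp only [sph, Set.mem_ofPred_eq, sq, qip, Quaternion.ext_iff, Quaternion.re_mul,
      Quaternion.imI_mul, Quaternion.imJ_mul, Quaternion.imK_mul, Quaternion.re_star,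
      Quaternion.imI_star, Quaternion.imJ_star, Quaternion.imK_star] <;>
    simp [qi, qj, qk]

def frameSum (Λ : ℍ[ℝ] →ₗ[ℝ] ℍ[ℝ]) (e₁ e₂ e₃ x : ℍ[ℝ]) : ℍ[ℝ] :=
  Λ x + Λ (e₁ * x) * e₁ + Λ (e₂ * x) * e₂ + Λ (e₃ * x) * e₃

theorem frameSum_eq_sum_frameBasis (Λ : ℍ[ℝ] →ₗ[ℝ] ℍ[ℝ]) {e₁ e₂ e₃ : ℍ[ℝ]}
    (h1 : e₁ ∈ sph) (h2 : e₂ ∈ sph) (h3 : e₃ ∈ sph)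
    (h12 : qip e₁ e₂ = 0) (h13 : qip e₁ e₃ = 0) (h23 : qip e₂ e₃ = 0) (x : ℍ[ℝ]) :
    frameSum Λ e₁ e₂ e₃ x = ∑ i, Λ (frameBasis h1 h2 h3 h12 h13 h23 i * x) *
      frameBasis h1 h2 h3 h12 h13 h23 i := by
  simp [frameSum, frameBasis, Fin.sum_univ_four]

theorem frameSum_eq_frameSum (Λ : ℍ[ℝ] →ₗ[ℝ] ℍ[ℝ]) {e₁ e₂ e₃ f₁ f₂ f₃ : ℍ[ℝ]}
    (h1 : e₁ ∈ sph) (h2 : e₂ ∈ sph) (h3 : e₃ ∈ sph)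
    (h12 : qip e₁ e₂ = 0) (h13 : qip e₁ e₃ = 0) (h23 : qip e₂ e₃ = 0)
    (g1 : f₁ ∈ sph) (g2 : f₂ ∈ sph) (g3 : f₃ ∈ sph)
    (g12 : qip f₁ f₂ = 0) (g13 : qip f₁ f₃ = 0) (g23 : qip f₂ f₃ = 0) (x : ℍ[ℝ]) :
    frameSum Λ e₁ e₂ e₃ x = frameSum Λ f₁ f₂ f₃ x := by
  rw [frameSum_eq_sum_frameBasis Λ h1 h2 h3 h12 h13 h23,
    frameSum_eq_sum_frameBasis Λ g1 g2 g3 g12 g13 g23]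
  exact OrthonormalBasis.sum_apply_self_eq
    ((LinearMap.mul ℝ ℍ[ℝ]).compl₁₂ (Λ ∘ₗ LinearMap.mulRight ℝ x) LinearMap.id) _ _

theorem map_eq_smul_sum (Λ : ℍ[ℝ] →ₗ[ℝ] ℍ[ℝ]) (x : ℍ[ℝ]) :
    Λ x = x.re • Λ 1 + x.imI • Λ qi + x.imJ • Λ qj + x.imK • Λ qk := by
  have hx : x = x.re • (1 : ℍ[ℝ]) + x.imI • qi + x.imJ • qj + x.imK • qk := by
    ext <;>
      simp only [Quaternion.re_add, Quaternion.imI_add, Quaternion.imJ_add, Quaternion.imK_add,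
        Quaternion.re_smul, Quaternion.imI_smul, Quaternion.imJ_smul, Quaternion.imK_smul] <;>
      simp [qi, qj, qk]
  conv_lhs => rw [hx]
  simp

theorem frameSum_qi_qj_qk (Λ : ℍ[ℝ] →ₗ[ℝ] ℍ[ℝ]) (x : ℍ[ℝ]) :
    frameSum Λ qi qj qk x = frameSum Λ qi qj qk 1 * star x := by
  simp only [frameSum, mul_one]
  rw [map_eq_smul_sum Λ x, map_eq_smul_sum Λ (qi * x), map_eq_smul_sum Λ (qj * x),
    map_eq_smul_sum Λ (qk * x)]
  ext <;>
    simp only [Quaternion.re_mul, Quaternion.imI_mul, Quaternion.imJ_mul, Quaternion.imK_mul,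
      Quaternion.re_add, Quaternion.imI_add, Quaternion.imJ_add, Quaternion.imK_add,
      Quaternion.re_smul, Quaternion.imI_smul, Quaternion.imJ_smul, Quaternion.imK_smul,
      Quaternion.re_star, Quaternion.imI_star, Quaternion.imJ_star, Quaternion.imK_star] <;>
    simp [qi, qj, qk] <;> ring

theorem isReg_iff_frameSum_eq_zero (Λ : ℍ[ℝ] →ₗ[ℝ] ℍ[ℝ]) :
    IsReg Λ ↔ frameSum Λ qi qj qk 1 = 0 := by
  simp only [IsReg, frameSum, mul_one]

/-- Characterizations of regularity of a real linear map `Λ : ℍ → ℍ` in terms of any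
pairwise orthogonal `e₁, e₂, e₃ ∈ 𝕊`. -/
theorem stmt5 (Λ : ℍ[ℝ] →ₗ[ℝ] ℍ[ℝ]) (e₁ e₂ e₃ : ℍ[ℝ])
    (h1 : e₁ ∈ sph) (h2 : e₂ ∈ sph) (h3 : e₃ ∈ sph)
    (h12 : qip e₁ e₂ = 0) (h13 : qip e₁ e₃ = 0) (h23 : qip e₂ e₃ = 0) :
    List.TFAE [IsReg Λ,
      ∀ x, Λ x = -(Λ (e₁ * x) * e₁ + Λ (e₂ * x) * e₂ + Λ (e₃ * x) * e₃),
      ∀ x, Λ x + Λ (e₁ * x) * e₁ + Λ (e₂ * x) * e₂ + Λ (e₃ * x) * e₃ = 0,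
      Λ 1 + Λ e₁ * e₁ + Λ e₂ * e₂ + Λ e₃ * e₃ = 0] := by
  obtain ⟨hi, hj, hk, hij, hik, hjk⟩ := qi_qj_qk_orthogonal_units
  have hframe : ∀ x, frameSum Λ e₁ e₂ e₃ x = frameSum Λ qi qj qk 1 * star x := fun x => by
    rw [frameSum_eq_frameSum Λ h1 h2 h3 h12 h13 h23 hi hj hk hij hik hjk, frameSum_qi_qj_qk]
  tfae_have 1 → 3 := fun hreg x => by
    rw [isReg_iff_frameSum_eq_zero] at hreg
    show frameSum Λ e₁ e₂ e₃ x = 0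
    rw [hframe, hreg, zero_mul]
  tfae_have 2 ↔ 3 := forall_congr' fun x => by
    rw [eq_neg_iff_add_eq_zero]
    simp only [add_assoc]
  tfae_have 3 → 4 := fun h => by simpa only [mul_one] using h 1
  tfae_have 4 → 1 := fun h => by
    have hframe1 := hframe 1
    rw [star_one, mul_one] at hframe1
    rw [isReg_iff_frameSum_eq_zero, ← hframe1]
    simpa only [frameSum, mul_one] using h
  tfae_finish

end
end

section
/- Let Λ : ℍ → ℍ be a regular ℝ-linear map with s(Λ) = 2. Then there exists ĝ ∈ 𝕊 such that for all g, h ∈ 𝕊, Λ is complex linear of type (g,h) if and only if (g,h) = (ĝ,ĝ) or (g,h) = (−ĝ,−ĝ). Moreover, for every pair e₁, e₂ ∈ 𝕊 such that e₁, e₂, ĝ are pairwise orthogonal, there exist nonzero λ₁, λ₂ ∈ ℍ with Λ = λ₁·θ̄_{e₁} + λ₂·θ̄_{e₂}. -/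
/-!
By minimality of the size, `Λ = λ₁ θ̄_{e₁} + λ₂ θ̄_{e₂}` with `λ₁, λ₂ ≠ 0` and `e₁ ⊥ e₂`; take
`ĝ = e₁ e₂`. Both `θ̄_{e_ℓ}` are anti-multiplicative and fix `ĝ`, so `Λ` has types `(±ĝ, ±ĝ)`.
Conversely, substituting `x = θ̄_{e₁} z` in `Λ(g x) = Λ(x) h` gives `λ₁ z A = λ₂ κ z B` for all
`z`, with `A`, `B` fixed and `κ = e₂ e₁`.
Either `A = B = 0`, which makes `g` commute with `ĝ`, so `g = ±ĝ`; or `λ₂` is a real multiple of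
`λ₁ ĝ`, and then `Λ` is a left multiple of a single `θ̄_p`, contradicting `s(Λ) = 2`.
For the second part, `θ̄_{α e₁ + β e₂} = (α + β ĝ)(α θ̄_{e₁} - β ĝ θ̄_{e₂})`, so every `θ̄_p` with
`p ⊥ ĝ` lies in the left `ℍ`-span of `θ̄_{e₁}, θ̄_{e₂}`; as `E₁ E₂ = ±ĝ` the same holds with the
roles of `(e₁, e₂)` and `(E₁, E₂)` exchanged, and the new coefficients are nonzero since
`s(Λ) = 2`.
-/

noncomputable section

open Quaternion Classical

lemma qip_eq_inner (x y : ℍ[ℝ]) : qip x y = inner ℝ x y := rfl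

lemma lmul_comp (a : ℍ[ℝ]) (f : ℍ[ℝ] →ₗ[ℝ] ℍ[ℝ]) : (lmul a).comp f = a • f := rfl

lemma thetaBar_apply (p x : ℍ[ℝ]) : thetaBar p x = p * star x * p⁻¹ := rfl

section Sphere

variable {x y : ℍ[ℝ]}

lemma mem_sph_iff : x ∈ sph ↔ x.re = 0 ∧ normSq x = 1 := by
  constructor
  · intro h
    have h' : x * x = -1 := by rw [← sq]; exact h
    have hre := congrArg QuaternionAlgebra.re h'
    have hi := congrArg QuaternionAlgebra.imI h'
    have hj := congrArg QuaternionAlgebra.imJ h'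
    have hk := congrArg QuaternionAlgebra.imK h'
    simp only [re_mul, imI_mul, imJ_mul, imK_mul, re_neg, imI_neg, imJ_neg, imK_neg, re_one,
      imI_one, imJ_one, imK_one] at hre hi hj hk
    have h0 : x.re = 0 := by
      nlinarith [sq_nonneg x.imI, sq_nonneg x.imJ, sq_nonneg x.imK, sq_nonneg x.re]
    refine ⟨h0, ?_⟩
    rw [normSq_def']
    simp only [h0] at hre ⊢
    linarith
  · rintro ⟨hre, hn⟩
    show x ^ 2 = -1
    rw [sq_eq_neg_normSq.2 hre, hn, coe_one]

lemma re_eq_zero_of_mem_sph (hx : x ∈ sph) : x.re = 0 := (mem_sph_iff.1 hx).1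

lemma norm_of_mem_sph (hx : x ∈ sph) : ‖x‖ = 1 := by
  have h := (mem_sph_iff.1 hx).2
  rw [normSq_eq_norm_mul_self, mul_self_eq_one_iff] at h
  exact h.resolve_right (by linarith [norm_nonneg x])

lemma inner_self_of_mem_sph (hx : x ∈ sph) : inner ℝ x x = 1 := by
  rw [real_inner_self_eq_norm_sq, norm_of_mem_sph hx, one_pow]

lemma mul_self_of_mem_sph (hx : x ∈ sph) : x * x = -1 := by rw [← sq]; exact hx

lemma star_of_mem_sph (hx : x ∈ sph) : star x = -x := star_eq_neg.2 (re_eq_zero_of_mem_sph hx)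

lemma inv_of_mem_sph (hx : x ∈ sph) : x⁻¹ = -x :=
  inv_eq_of_mul_eq_one_right (by rw [mul_neg, mul_self_of_mem_sph hx, neg_neg])

lemma ne_zero_of_mem_sph (hx : x ∈ sph) : x ≠ 0 := by
  rintro rfl; simp [sph] at hx

lemma mul_eq_neg_mul_of_inner_eq_zero (hx : x.re = 0) (hy : y.re = 0) (h : inner ℝ x y = 0) :
    x * y = -(y * x) := by
  rw [inner_def] at h
  ext <;> simp [re_mul, imI_mul, imJ_mul, imK_mul, hx, hy] at h ⊢ <;> linarith

/-- `(x - y) (x + y) = x² - y² = 0`, and `ℍ` has no zero divisors. -/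
lemma eq_or_eq_neg_of_commute (hx : x ∈ sph) (hy : y ∈ sph) (h : Commute x y) :
    x = y ∨ x = -y := by
  have : (x - y) * (x + y) = 0 := by
    rw [sub_mul, mul_add, mul_add, mul_self_of_mem_sph hx, mul_self_of_mem_sph hy, h.eq]; abel
  rcases mul_eq_zero.1 this with h | h
  · exact Or.inl (sub_eq_zero.1 h)
  · exact Or.inr (eq_neg_of_add_eq_zero_left h)

end Sphere

lemma exists_eq_coe_of_forall_commute {m : ℍ[ℝ]} (h : ∀ z, Commute z m) : ∃ c : ℝ, m = c := by
  have hi := (h qi).eq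
  have hj := (h qj).eq
  have hi2 := congrArg QuaternionAlgebra.imJ hi
  have hi3 := congrArg QuaternionAlgebra.imK hi
  have hj1 := congrArg QuaternionAlgebra.imI hj
  have hj3 := congrArg QuaternionAlgebra.imK hj
  simp only [imI_mul, imJ_mul, imK_mul] at hi2 hi3 hj1 hj3
  simp only [qi, qj] at hi2 hi3 hj1 hj3
  refine ⟨m.re, ?_⟩
  ext <;> simp <;> linarith

/-- `a⁻¹ b` commutes with every `z`, and the centre of `ℍ` is `ℝ`. -/
lemma exists_eq_smul_of_forall_mul_mul_eq {a b A B : ℍ[ℝ]} (ha : a ≠ 0) (hB : B ≠ 0)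
    (h : ∀ z, a * z * A = b * z * B) : ∃ c : ℝ, b = c • a := by
  have hcomm : ∀ z, Commute z (a⁻¹ * b) := by
    intro z
    have hz : (a * z * a⁻¹ * b) * B = (b * z) * B := by
      calc a * z * a⁻¹ * b * B = a * z * a⁻¹ * (a * 1 * A) := by rw [h 1]; noncomm_ring
        _ = a * z * A := by simp only [mul_one, mul_assoc, inv_mul_cancel_left₀ ha]
        _ = b * z * B := h z
    have := mul_right_cancel₀ hB hz
    calc z * (a⁻¹ * b) = a⁻¹ * (a * z * a⁻¹ * b) := by
          simp only [mul_assoc, inv_mul_cancel_left₀ ha]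
      _ = a⁻¹ * b * z := by rw [this, mul_assoc]
  obtain ⟨c, hc⟩ := exists_eq_coe_of_forall_commute hcomm
  refine ⟨c, ?_⟩
  rw [← mul_coe_eq_smul, ← hc, mul_inv_cancel_left₀ ha]

lemma thetaBar_apply_of_mem_sph {e : ℍ[ℝ]} (he : e ∈ sph) (x : ℍ[ℝ]) :
    thetaBar e x = -(e * star x * e) := by
  rw [thetaBar_apply, inv_of_mem_sph he, mul_neg]

lemma thetaBar_mul (p a b : ℍ[ℝ]) : thetaBar p (a * b) = thetaBar p b * thetaBar p a := by
  rcases eq_or_ne p 0 with rfl | hp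
  · simp [thetaBar_apply]
  · simp only [thetaBar_apply, star_mul, mul_assoc, inv_mul_cancel_left₀ hp]

lemma thetaBar_thetaBar {a : ℍ[ℝ]} (ha : a ∈ sph) (b z : ℍ[ℝ]) :
    thetaBar b (thetaBar a z) = b * a * z * (b * a)⁻¹ := by
  simp only [thetaBar_apply, star_mul, star_star, mul_inv_rev, inv_of_mem_sph ha, star_neg,
    star_of_mem_sph ha]
  noncomm_ring

lemma thetaBar_eq_self {e x : ℍ[ℝ]} (he : e ≠ 0) (hx : x.re = 0) (hex : e * x = -(x * e)) :
    thetaBar e x = x := by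
  rw [thetaBar_apply, star_eq_neg.2 hx, mul_neg, hex, neg_neg, mul_inv_cancel_right₀ he]

lemma IsCLType.neg {Λ : ℍ[ℝ] →ₗ[ℝ] ℍ[ℝ]} {g h : ℍ[ℝ]} (hΛ : IsCLType Λ g h) :
    IsCLType Λ (-g) (-h) := fun x => by
  rw [neg_mul, map_neg, hΛ, mul_neg]

section OrthonormalPair

variable {e₁ e₂ : ℍ[ℝ]}

lemma mul_comm_neg_of_mem_sph (h₁ : e₁ ∈ sph) (h₂ : e₂ ∈ sph) (ho : inner ℝ e₁ e₂ = 0) :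
    e₂ * e₁ = -(e₁ * e₂) := by
  rw [mul_eq_neg_mul_of_inner_eq_zero (re_eq_zero_of_mem_sph h₁) (re_eq_zero_of_mem_sph h₂) ho,
    neg_neg]

lemma mul_mem_sph (h₁ : e₁ ∈ sph) (h₂ : e₂ ∈ sph) (ho : inner ℝ e₁ e₂ = 0) : e₁ * e₂ ∈ sph := by
  have h := mul_comm_neg_of_mem_sph h₁ h₂ ho
  calc (e₁ * e₂) ^ 2 = e₁ * (e₂ * e₁) * e₂ := by noncomm_ring
    _ = -((e₁ * e₁) * (e₂ * e₂)) := by rw [h]; noncomm_ring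
    _ = -1 := by rw [mul_self_of_mem_sph h₁, mul_self_of_mem_sph h₂]; norm_num

lemma inner_mul_left_eq_zero (h₁ : e₁ ∈ sph) (h₂ : e₂ ∈ sph) (ho : inner ℝ e₁ e₂ = 0) :
    inner ℝ e₁ (e₁ * e₂) = 0 := by
  rw [inner_def, star_mul, star_of_mem_sph h₁, star_of_mem_sph h₂, neg_mul_neg,
    mul_comm_neg_of_mem_sph h₁ h₂ ho, mul_neg, ← mul_assoc, mul_self_of_mem_sph h₁]
  simp [re_eq_zero_of_mem_sph h₂]

lemma inner_mul_right_eq_zero (h₁ : e₁ ∈ sph) (h₂ : e₂ ∈ sph) :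
    inner ℝ e₂ (e₁ * e₂) = 0 := by
  rw [inner_def, star_mul, star_of_mem_sph h₁, star_of_mem_sph h₂, neg_mul_neg, ← mul_assoc,
    mul_self_of_mem_sph h₂]
  simp [re_eq_zero_of_mem_sph h₁]

/-- `v = x - ⟨x, e₁⟩ e₁ - ⟨x, e₂⟩ e₂` anticommutes with `e₁` and `e₂`, hence commutes with
`e₁ e₂`; being orthogonal to `e₁ e₂` it also anticommutes with it, so `v = 0`. -/
lemma eq_inner_smul_add_inner_smul (h₁ : e₁ ∈ sph) (h₂ : e₂ ∈ sph) (ho : inner ℝ e₁ e₂ = 0)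
    {x : ℍ[ℝ]} (hx : x.re = 0) (hxg : inner ℝ x (e₁ * e₂) = 0) :
    x = inner ℝ x e₁ • e₁ + inner ℝ x e₂ • e₂ := by
  set v := x - (inner ℝ x e₁ • e₁ + inner ℝ x e₂ • e₂) with hv
  have hg := mul_mem_sph h₁ h₂ ho
  have hre₁ := re_eq_zero_of_mem_sph h₁
  have hre₂ := re_eq_zero_of_mem_sph h₂
  have hvre : v.re = 0 := by simp [hv, hx, hre₁, hre₂]
  have ho' : inner ℝ e₂ e₁ = 0 := by rw [real_inner_comm]; exact ho
  have hv₁ : inner ℝ v e₁ = 0 := by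
    simp [hv, inner_sub_left, inner_add_left, inner_smul_left, norm_of_mem_sph h₁, ho']
  have hv₂ : inner ℝ v e₂ = 0 := by
    simp [hv, inner_sub_left, inner_add_left, inner_smul_left, norm_of_mem_sph h₂, ho]
  have hvg : inner ℝ v (e₁ * e₂) = 0 := by
    simp [hv, inner_sub_left, inner_add_left, inner_smul_left, hxg,
      inner_mul_left_eq_zero h₁ h₂ ho, inner_mul_right_eq_zero h₁ h₂]
  have a₁ := mul_eq_neg_mul_of_inner_eq_zero hvre hre₁ hv₁
  have a₂ := mul_eq_neg_mul_of_inner_eq_zero hvre hre₂ hv₂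
  have a₃ := mul_eq_neg_mul_of_inner_eq_zero hvre (re_eq_zero_of_mem_sph hg) hvg
  have hcomm : v * (e₁ * e₂) = e₁ * e₂ * v := by
    rw [← mul_assoc, a₁, neg_mul, mul_assoc, a₂, mul_neg, neg_neg, mul_assoc]
  have h2 : (2 : ℝ) • (v * (e₁ * e₂)) = 0 := by
    rw [two_smul]; nth_rewrite 1 [a₃]; rw [hcomm, neg_add_cancel]
  have hv0 : v = 0 := by simpa [ne_zero_of_mem_sph hg] using h2
  exact sub_eq_zero.1 hv0

lemma smul_add_smul_mem_sph (h₁ : e₁ ∈ sph) (h₂ : e₂ ∈ sph) (ho : inner ℝ e₁ e₂ = 0)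
    {α β : ℝ} (h : α ^ 2 + β ^ 2 = 1) : α • e₁ + β • e₂ ∈ sph := by
  refine mem_sph_iff.2 ⟨by simp [re_eq_zero_of_mem_sph h₁, re_eq_zero_of_mem_sph h₂], ?_⟩
  have ho' : inner ℝ e₂ e₁ = 0 := by rw [real_inner_comm]; exact ho
  rw [← Quaternion.inner_self]
  simp only [inner_add_left, inner_add_right, real_inner_smul_left, real_inner_smul_right,
    inner_self_of_mem_sph h₁, inner_self_of_mem_sph h₂, ho, ho']
  linear_combination h

/-- Expanding `p y p` for `p = α e₁ + β e₂`, the cross terms are rewritten with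
`e₂ y e₁ = (e₁ e₂) e₁ y e₁` and `e₁ y e₂ = -(e₁ e₂) e₂ y e₂`. -/
lemma thetaBar_smul_add_smul (h₁ : e₁ ∈ sph) (h₂ : e₂ ∈ sph) (ho : inner ℝ e₁ e₂ = 0)
    {α β : ℝ} (hp : α • e₁ + β • e₂ ∈ sph) :
    thetaBar (α • e₁ + β • e₂) =
      (α • 1 + β • (e₁ * e₂)) • (α • thetaBar e₁ - (β • (e₁ * e₂)) • thetaBar e₂) := by
  have k₁ : ∀ w, e₂ * (e₂ * w) = -w := fun w => by
    rw [← mul_assoc, mul_self_of_mem_sph h₂, neg_one_mul]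
  have k₂ : ∀ w, e₁ * (e₂ * (e₁ * w)) = e₂ * w := fun w => by
    calc e₁ * (e₂ * (e₁ * w)) = e₁ * (e₂ * e₁) * w := by noncomm_ring
      _ = -(e₁ * e₁) * e₂ * w := by rw [mul_comm_neg_of_mem_sph h₁ h₂ ho]; noncomm_ring
      _ = e₂ * w := by rw [mul_self_of_mem_sph h₁]; noncomm_ring
  refine LinearMap.ext fun x => ?_
  simp only [LinearMap.smul_apply, LinearMap.sub_apply, smul_eq_mul, thetaBar_apply_of_mem_sph hp,
    thetaBar_apply_of_mem_sph h₁, thetaBar_apply_of_mem_sph h₂]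
  simp only [add_mul, mul_add, mul_sub, smul_mul_assoc, mul_smul_comm, one_mul,
    mul_assoc, k₁, k₂, smul_neg, mul_neg, neg_neg]
  module

lemma thetaBar_mem_span (h₁ : e₁ ∈ sph) (h₂ : e₂ ∈ sph) (ho : inner ℝ e₁ e₂ = 0) {p : ℍ[ℝ]}
    (hp : p ∈ sph) (hpg : inner ℝ p (e₁ * e₂) = 0) :
    thetaBar p ∈ Submodule.span ℍ[ℝ] {thetaBar e₁, thetaBar e₂} := by
  have hpe := eq_inner_smul_add_inner_smul h₁ h₂ ho (re_eq_zero_of_mem_sph hp) hpg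
  rw [hpe] at hp ⊢
  rw [thetaBar_smul_add_smul h₁ h₂ ho hp]
  refine Submodule.smul_mem _ _ (Submodule.sub_mem _ ?_ ?_)
  · exact Submodule.smul_of_tower_mem _ _ (Submodule.subset_span (by simp))
  · exact Submodule.smul_mem _ _ (Submodule.subset_span (by simp))

lemma thetaBar_left_mul_eq_self (h₁ : e₁ ∈ sph) (h₂ : e₂ ∈ sph) (ho : inner ℝ e₁ e₂ = 0) :
    thetaBar e₁ (e₁ * e₂) = e₁ * e₂ :=
  thetaBar_eq_self (ne_zero_of_mem_sph h₁) (re_eq_zero_of_mem_sph (mul_mem_sph h₁ h₂ ho))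
    (mul_eq_neg_mul_of_inner_eq_zero (re_eq_zero_of_mem_sph h₁)
      (re_eq_zero_of_mem_sph (mul_mem_sph h₁ h₂ ho)) (inner_mul_left_eq_zero h₁ h₂ ho))

lemma thetaBar_right_mul_eq_self (h₁ : e₁ ∈ sph) (h₂ : e₂ ∈ sph) (ho : inner ℝ e₁ e₂ = 0) :
    thetaBar e₂ (e₁ * e₂) = e₁ * e₂ :=
  thetaBar_eq_self (ne_zero_of_mem_sph h₂) (re_eq_zero_of_mem_sph (mul_mem_sph h₁ h₂ ho))
    (mul_eq_neg_mul_of_inner_eq_zero (re_eq_zero_of_mem_sph h₂)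
      (re_eq_zero_of_mem_sph (mul_mem_sph h₁ h₂ ho)) (inner_mul_right_eq_zero h₁ h₂))

lemma isCLType_mul (h₁ : e₁ ∈ sph) (h₂ : e₂ ∈ sph) (ho : inner ℝ e₁ e₂ = 0) (l₁ l₂ : ℍ[ℝ]) :
    IsCLType (l₁ • thetaBar e₁ + l₂ • thetaBar e₂) (e₁ * e₂) (e₁ * e₂) := fun x => by
  simp only [LinearMap.add_apply, LinearMap.smul_apply, smul_eq_mul]
  rw [thetaBar_mul _ (e₁ * e₂), thetaBar_mul _ (e₁ * e₂), thetaBar_left_mul_eq_self h₁ h₂ ho,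
    thetaBar_right_mul_eq_self h₁ h₂ ho, add_mul, mul_assoc, mul_assoc]

/-- Substituting `x = θ̄_{e₁} z` turns complex linearity into `l₁ z A = l₂ κ z B` for all `z`,
where `κ = e₂ e₁`, since `θ̄_{e₁} ∘ θ̄_{e₁} = id` and `θ̄_{e₂} ∘ θ̄_{e₁}` is conjugation by `κ`. -/
lemma IsCLType.thetaBar_eq_or_exists_smul (h₁ : e₁ ∈ sph) (h₂ : e₂ ∈ sph)
    (ho : inner ℝ e₁ e₂ = 0) {l₁ l₂ G H : ℍ[ℝ]} (hl₁ : l₁ ≠ 0)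
    (hΛ : IsCLType (l₁ • thetaBar e₁ + l₂ • thetaBar e₂) G H) :
    (thetaBar e₁ G = H ∧ thetaBar e₂ G = H) ∨ ∃ c : ℝ, l₂ = l₁ * (c • (e₁ * e₂)) := by
  set κ := e₂ * e₁ with hκ
  have hκs : κ ∈ sph := mul_mem_sph h₂ h₁ (by rw [real_inner_comm]; exact ho)
  have key : ∀ z, l₁ * z * (thetaBar e₁ G - H) =
      l₂ * κ * z * (κ⁻¹ * (H - thetaBar e₂ G)) := by
    intro z
    have h := hΛ (thetaBar e₁ z)
    simp only [LinearMap.add_apply, LinearMap.smul_apply, smul_eq_mul, thetaBar_mul,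
      thetaBar_thetaBar h₁, mul_self_of_mem_sph h₁, inv_neg, inv_one, neg_one_mul, mul_neg_one,
      neg_neg, ← hκ] at h
    calc l₁ * z * (thetaBar e₁ G - H)
        = l₁ * (z * thetaBar e₁ G) + l₂ * (κ * z * κ⁻¹ * thetaBar e₂ G)
          - (l₁ * z + l₂ * (κ * z * κ⁻¹)) * H + l₂ * κ * z * (κ⁻¹ * (H - thetaBar e₂ G)) := by
          noncomm_ring
      _ = l₂ * κ * z * (κ⁻¹ * (H - thetaBar e₂ G)) := by rw [h, sub_self, zero_add]
  by_cases hB : κ⁻¹ * (H - thetaBar e₂ G) = 0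
  · have hA := key 1
    rw [hB, mul_zero, mul_one, mul_eq_zero, sub_eq_zero] at hA
    rw [mul_eq_zero, sub_eq_zero, inv_eq_zero] at hB
    exact Or.inl ⟨hA.resolve_left hl₁, (hB.resolve_left (ne_zero_of_mem_sph hκs)).symm⟩
  · obtain ⟨c, hc⟩ := exists_eq_smul_of_forall_mul_mul_eq hl₁ hB key
    refine Or.inr ⟨c, ?_⟩
    calc l₂ = l₂ * κ * κ⁻¹ := (mul_inv_cancel_right₀ (ne_zero_of_mem_sph hκs) l₂).symm
      _ = l₁ * (c • (e₁ * e₂)) := by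
        rw [hc, inv_of_mem_sph hκs, hκ, mul_comm_neg_of_mem_sph h₁ h₂ ho, neg_neg,
          smul_mul_assoc, mul_smul_comm]

lemma eq_and_eq_or_of_thetaBar_eq (h₁ : e₁ ∈ sph) (h₂ : e₂ ∈ sph) (ho : inner ℝ e₁ e₂ = 0)
    {G H : ℍ[ℝ]} (hG : G ∈ sph) (hH₁ : thetaBar e₁ G = H) (hH₂ : thetaBar e₂ G = H) :
    (G = e₁ * e₂ ∧ H = e₁ * e₂) ∨ (G = -(e₁ * e₂) ∧ H = -(e₁ * e₂)) := by
  have hfix : e₂ * e₁ * G * (e₂ * e₁)⁻¹ = G := by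
    rw [← thetaBar_thetaBar h₁, hH₁, ← hH₂, thetaBar_thetaBar h₂, mul_self_of_mem_sph h₂]
    simp
  rw [mul_inv_eq_iff_eq_mul₀ (ne_zero_of_mem_sph (mul_mem_sph h₂ h₁
    (by rw [real_inner_comm]; exact ho))), mul_comm_neg_of_mem_sph h₁ h₂ ho, neg_mul,
    mul_neg, neg_inj] at hfix
  rcases eq_or_eq_neg_of_commute hG (mul_mem_sph h₁ h₂ ho) hfix.symm with rfl | rfl
  · exact Or.inl ⟨rfl, by rw [← hH₁, thetaBar_left_mul_eq_self h₁ h₂ ho]⟩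
  · exact Or.inr ⟨rfl, by rw [← hH₁, map_neg, thetaBar_left_mul_eq_self h₁ h₂ ho]⟩

lemma qsize_smul_thetaBar_le_one (h₁ : e₁ ∈ sph) (h₂ : e₂ ∈ sph) (ho : inner ℝ e₁ e₂ = 0)
    (μ : ℍ[ℝ]) : qsize (μ • thetaBar e₁) ≤ 1 := by
  refine (Nat.sInf_le ?_).trans (show (if μ = 0 then 0 else 1) + (if (0 : ℍ[ℝ]) = 0 then 0 else 1)
    + (if (0 : ℍ[ℝ]) = 0 then 0 else 1) ≤ 1 by split_ifs <;> simp_all)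
  refine ⟨e₁, e₂, e₁ * e₂, μ, 0, 0, h₁, h₂, mul_mem_sph h₁ h₂ ho, ho,
    inner_mul_left_eq_zero h₁ h₂ ho, inner_mul_right_eq_zero h₁ h₂, ?_, rfl⟩
  simp [lmul_comp]

/-- `θ̄_{e₁} + c (e₁ e₂) θ̄_{e₂}` is a left multiple of `θ̄_p` for the unit `p ∝ e₁ - c e₂`. -/
lemma qsize_smul_thetaBar_add_le_one (h₁ : e₁ ∈ sph) (h₂ : e₂ ∈ sph) (ho : inner ℝ e₁ e₂ = 0)
    (l : ℍ[ℝ]) (c : ℝ) :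
    qsize (l • thetaBar e₁ + (l * (c • (e₁ * e₂))) • thetaBar e₂) ≤ 1 := by
  obtain ⟨α, β, hαβ, hα, hβ⟩ : ∃ α β : ℝ, α ^ 2 + β ^ 2 = 1 ∧ α ≠ 0 ∧ β = -c * α := by
    have hs : √(1 + c ^ 2) ^ 2 = 1 + c ^ 2 := Real.sq_sqrt (by positivity)
    refine ⟨(√(1 + c ^ 2))⁻¹, -c * (√(1 + c ^ 2))⁻¹, ?_, by positivity, rfl⟩
    field_simp
    linarith
  have hp := smul_add_smul_mem_sph h₁ h₂ ho hαβ
  have hq := smul_add_smul_mem_sph h₁ h₂ ho (α := -β) (β := α) (by linarith)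
  have hpq : inner ℝ (α • e₁ + β • e₂) ((-β) • e₁ + α • e₂) = 0 := by
    have ho' : inner ℝ e₂ e₁ = 0 := by rw [real_inner_comm]; exact ho
    simp only [inner_add_left, inner_add_right, real_inner_smul_left, real_inner_smul_right,
      inner_self_of_mem_sph h₁, inner_self_of_mem_sph h₂, ho, ho']
    ring
  have hu : α • (1 : ℍ[ℝ]) + β • (e₁ * e₂) ≠ 0 := by
    intro h
    have := congrArg QuaternionAlgebra.re h
    simp [re_eq_zero_of_mem_sph (mul_mem_sph h₁ h₂ ho)] at this
    exact hα this
  have hΛ : l • thetaBar e₁ + (l * (c • (e₁ * e₂))) • thetaBar e₂ =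
      (α⁻¹ • (l * (α • (1 : ℍ[ℝ]) + β • (e₁ * e₂))⁻¹)) • thetaBar (α • e₁ + β • e₂) := by
    refine LinearMap.ext fun x => ?_
    rw [thetaBar_smul_add_smul h₁ h₂ ho hp]
    simp only [LinearMap.add_apply, LinearMap.smul_apply, LinearMap.sub_apply, smul_eq_mul,
      smul_mul_assoc, mul_assoc, inv_mul_cancel_left₀ hu]
    subst hβ
    simp only [mul_sub, mul_smul_comm]
    match_scalars <;> field_simp
  rw [hΛ]
  exact qsize_smul_thetaBar_le_one hp hq hpq _

/-- Orthonormal `E₁, E₂ ⊥ e₁ e₂` anticommute with `e₁ e₂`, so `E₁ E₂ = ±e₁ e₂` and hence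
`e₁, e₂ ⊥ E₁ E₂`. -/
lemma span_thetaBar_le {E₁ E₂ : ℍ[ℝ]} (h₁ : e₁ ∈ sph) (h₂ : e₂ ∈ sph)
    (ho : inner ℝ e₁ e₂ = 0) (hE₁ : E₁ ∈ sph) (hE₂ : E₂ ∈ sph) (hE : inner ℝ E₁ E₂ = 0)
    (hE₁g : inner ℝ E₁ (e₁ * e₂) = 0) (hE₂g : inner ℝ E₂ (e₁ * e₂) = 0) :
    Submodule.span ℍ[ℝ] {thetaBar e₁, thetaBar e₂} ≤
      Submodule.span ℍ[ℝ] {thetaBar E₁, thetaBar E₂} := by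
  have hg := mul_mem_sph h₁ h₂ ho
  have a₁ := mul_eq_neg_mul_of_inner_eq_zero (re_eq_zero_of_mem_sph hE₁)
    (re_eq_zero_of_mem_sph hg) hE₁g
  have a₂ := mul_eq_neg_mul_of_inner_eq_zero (re_eq_zero_of_mem_sph hE₂)
    (re_eq_zero_of_mem_sph hg) hE₂g
  have hcomm : Commute (E₁ * E₂) (e₁ * e₂) := by
    rw [Commute, SemiconjBy, mul_assoc, a₂, mul_neg, ← mul_assoc, a₁, neg_mul, neg_neg, mul_assoc]
  have horth : ∀ e, inner ℝ e (e₁ * e₂) = 0 → inner ℝ e (E₁ * E₂) = 0 := by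
    rcases eq_or_eq_neg_of_commute (mul_mem_sph hE₁ hE₂ hE) hg hcomm with h | h <;>
      intro e he <;> simp [h, he]
  rw [Submodule.span_le, Set.insert_subset_iff, Set.singleton_subset_iff]
  exact ⟨thetaBar_mem_span hE₁ hE₂ hE h₁ (horth _ (inner_mul_left_eq_zero h₁ h₂ ho)),
    thetaBar_mem_span hE₁ hE₂ hE h₂ (horth _ (inner_mul_right_eq_zero h₁ h₂))⟩

end OrthonormalPair

lemma exists_pair_of_qsize_eq_two {Λ : ℍ[ℝ] →ₗ[ℝ] ℍ[ℝ]} (hs : qsize Λ = 2) :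
    ∃ e₁ e₂ l₁ l₂ : ℍ[ℝ], e₁ ∈ sph ∧ e₂ ∈ sph ∧ inner ℝ e₁ e₂ = 0 ∧ l₁ ≠ 0 ∧ l₂ ≠ 0 ∧
      Λ = l₁ • thetaBar e₁ + l₂ • thetaBar e₂ := by
  have hne := Nat.nonempty_of_pos_sInf (hs.symm ▸ two_pos : 0 < qsize Λ)
  obtain ⟨f₁, f₂, f₃, m₁, m₂, m₃, hf₁, hf₂, hf₃, h₁₂, h₁₃, h₂₃, rfl, hn⟩ := Nat.sInf_mem hne
  have hcount := hn.symm.trans hs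
  simp only [lmul_comp] at hcount ⊢
  rcases eq_or_ne m₁ 0 with rfl | hm₁ <;> rcases eq_or_ne m₂ 0 with rfl | hm₂ <;>
    rcases eq_or_ne m₃ 0 with rfl | hm₃ <;> simp [*] at hcount
  · exact ⟨f₂, f₃, m₂, m₃, hf₂, hf₃, h₂₃, hm₂, hm₃, by simp⟩
  · exact ⟨f₁, f₃, m₁, m₃, hf₁, hf₃, h₁₃, hm₁, hm₃, by simp⟩
  · exact ⟨f₁, f₂, m₁, m₂, hf₁, hf₂, h₁₂, hm₁, hm₂, by simp⟩

theorem stmt10_general (Λ : ℍ[ℝ] →ₗ[ℝ] ℍ[ℝ]) (hs : qsize Λ = 2) :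
    ∃ gh ∈ sph,
      (∀ g ∈ sph, ∀ h ∈ sph,
        (IsCLType Λ g h ↔ (g = gh ∧ h = gh) ∨ (g = -gh ∧ h = -gh))) ∧
      ∀ e₁ ∈ sph, ∀ e₂ ∈ sph, qip e₁ e₂ = 0 → qip e₁ gh = 0 → qip e₂ gh = 0 →
        ∃ l₁ l₂ : ℍ[ℝ], l₁ ≠ 0 ∧ l₂ ≠ 0 ∧
          Λ = (lmul l₁).comp (thetaBar e₁) + (lmul l₂).comp (thetaBar e₂) := by
  obtain ⟨e₁, e₂, l₁, l₂, h₁, h₂, ho, hl₁, hl₂, rfl⟩ := exists_pair_of_qsize_eq_two hs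
  simp only [qip_eq_inner, lmul_comp]
  refine ⟨e₁ * e₂, mul_mem_sph h₁ h₂ ho, fun G hG H _ => ⟨fun hGH => ?_, ?_⟩, ?_⟩
  · obtain hfix | ⟨c, rfl⟩ := hGH.thetaBar_eq_or_exists_smul h₁ h₂ ho hl₁
    · exact eq_and_eq_or_of_thetaBar_eq h₁ h₂ ho hG hfix.1 hfix.2
    · exact absurd hs (by linarith [qsize_smul_thetaBar_add_le_one h₁ h₂ ho l₁ c])
  · rintro (⟨rfl, rfl⟩ | ⟨rfl, rfl⟩)
    · exact isCLType_mul h₁ h₂ ho l₁ l₂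
    · exact (isCLType_mul h₁ h₂ ho l₁ l₂).neg
  · intro E₁ hE₁ E₂ hE₂ hE hE₁g hE₂g
    obtain ⟨L₁, L₂, hL⟩ := Submodule.mem_span_pair.1 <|
      span_thetaBar_le h₁ h₂ ho hE₁ hE₂ hE hE₁g hE₂g (Submodule.mem_span_pair.2 ⟨l₁, l₂, rfl⟩)
    refine ⟨L₁, L₂, ?_, ?_, hL.symm⟩ <;> rintro rfl <;>
      simp only [zero_smul, zero_add, add_zero] at hL
    · have := qsize_smul_thetaBar_le_one hE₂ hE₁ (by rw [real_inner_comm]; exact hE) L₂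
      rw [hL] at this; omega
    · have := qsize_smul_thetaBar_le_one hE₁ hE₂ hE L₁
      rw [hL] at this; omega

/-- A regular real linear map `Λ` of size `2`: there exists `ĝ ∈ 𝕊` such that `Λ` is
complex linear of type `(g,h)` iff `(g,h) = (ĝ,ĝ)` or `(g,h) = (−ĝ,−ĝ)`; moreover for any
`e₁, e₂ ∈ 𝕊` with `e₁, e₂, ĝ` pairwise orthogonal, `Λ = λ₁ θ̄_{e₁} + λ₂ θ̄_{e₂}` for some
nonzero `λ₁, λ₂`. -/
theorem stmt10 (Λ : ℍ[ℝ] →ₗ[ℝ] ℍ[ℝ]) (hreg : IsReg Λ) (hs : qsize Λ = 2) :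
    ∃ gh ∈ sph,
      (∀ g ∈ sph, ∀ h ∈ sph,
        (IsCLType Λ g h ↔ (g = gh ∧ h = gh) ∨ (g = -gh ∧ h = -gh))) ∧
      ∀ e₁ ∈ sph, ∀ e₂ ∈ sph, qip e₁ e₂ = 0 → qip e₁ gh = 0 → qip e₂ gh = 0 →
        ∃ l₁ l₂ : ℍ[ℝ], l₁ ≠ 0 ∧ l₂ ≠ 0 ∧
          Λ = (lmul l₁).comp (thetaBar e₁) + (lmul l₂).comp (thetaBar e₂) :=
  stmt10_general Λ hs
end
end

section
/- For every ℝ-linear map Λ : ℍ → ℍ there exist unique quaternions m₁, m₂, n₁, n₂ ∈ ℍ such that Λ(ι(z₁) + ι(z₂)·j) = m₁·ι(z₁) + m₂·ι(z₂) + n₁·ι(conj(z₁)) + n₂·ι(conj(z₂)) for all z₁, z₂ ∈ ℂ. Moreover, (1/4)·(Λ(1)·1 + Λ(i)·i + Λ(j)·j + Λ(k)·k) = (1/2)·(n₁ + n₂·j); in particular, Λ is regular if and only if n₂ = n₁·j. -/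
noncomputable section

open Quaternion Classical

/-!
Write `zₛ = xₛ + √-1 yₛ`. Since `ι(z₁) + ι(z₂)j = x₁ + y₁ i + x₂ j + y₂ k` and
`m ι(z) + n ι(z̄) = x (m + n) + y (m - n) i`, the representation amounts to the system
`m₁ + n₁ = Λ1`, `(m₁ - n₁) i = Λi`, `m₂ + n₂ = Λj`, `(m₂ - n₂) i = Λk`, which has the unique
solution `n₁ = (Λ1 + Λi·i)/2`, `n₂ = (Λj + Λk·i)/2` (and similarly for `m₁, m₂`). Then `ij = k`
gives `n₁ + n₂ j = (Λ1 + Λi·i + Λj·j + Λk·k)/2`, and `a + b j = 0 ↔ b = a j` as `j² = -1`.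
-/

@[simp] lemma qi_re : qi.re = 0 := rfl
@[simp] lemma qi_imI : qi.imI = 1 := rfl
@[simp] lemma qi_imJ : qi.imJ = 0 := rfl
@[simp] lemma qi_imK : qi.imK = 0 := rfl
@[simp] lemma qj_re : qj.re = 0 := rfl
@[simp] lemma qj_imI : qj.imI = 0 := rfl
@[simp] lemma qj_imJ : qj.imJ = 1 := rfl
@[simp] lemma qj_imK : qj.imK = 0 := rfl
@[simp] lemma qk_re : qk.re = 0 := rfl
@[simp] lemma qk_imI : qk.imI = 0 := rfl
@[simp] lemma qk_imJ : qk.imJ = 0 := rfl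
@[simp] lemma qk_imK : qk.imK = 1 := rfl

lemma iotaC_eq_re_smul_add_im_smul (z : ℂ) : iotaC z = z.re • (1 : ℍ[ℝ]) + z.im • qi := by
  ext <;> simp [iotaC]

lemma iotaC_add_iotaC_mul_qj (z₁ z₂ : ℂ) :
    iotaC z₁ + iotaC z₂ * qj = z₁.re • (1 : ℍ[ℝ]) + z₁.im • qi + z₂.re • qj + z₂.im • qk := by
  simp only [iotaC_eq_re_smul_add_im_smul, add_mul, smul_mul_assoc, one_mul, qi_mul_qj]
  abel

lemma mul_iotaC_add_mul_iotaC_conj (m n : ℍ[ℝ]) (z : ℂ) :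
    m * iotaC z + n * iotaC (starRingEnd ℂ z) = z.re • (m + n) + z.im • ((m - n) * qi) := by
  simp only [iotaC_eq_re_smul_add_im_smul, Complex.conj_re, Complex.conj_im, mul_add,
    mul_smul_comm, mul_one, neg_smul, mul_neg, sub_mul]
  module

lemma re_im_smul_eq_iff {E : Type*} [AddCommGroup E] [Module ℝ E] (a b c d a' b' c' d' : E) :
    (∀ z₁ z₂ : ℂ, z₁.re • a + z₁.im • b + z₂.re • c + z₂.im • d
      = z₁.re • a' + z₁.im • b' + z₂.re • c' + z₂.im • d') ↔
      a = a' ∧ b = b' ∧ c = c' ∧ d = d' := by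
  refine ⟨fun h => ⟨?_, ?_, ?_, ?_⟩, fun ⟨ha, hb, hc, hd⟩ _ _ => by rw [ha, hb, hc, hd]⟩
  · simpa using h 1 0
  · simpa using h Complex.I 0
  · simpa using h 0 1
  · simpa using h 0 Complex.I

lemma map_iotaC_add_iotaC_mul_qj_eq_iff (Λ : ℍ[ℝ] →ₗ[ℝ] ℍ[ℝ]) (m₁ m₂ n₁ n₂ : ℍ[ℝ]) :
    (∀ z₁ z₂ : ℂ, Λ (iotaC z₁ + iotaC z₂ * qj)
        = m₁ * iotaC z₁ + m₂ * iotaC z₂ + n₁ * iotaC ((starRingEnd ℂ) z₁)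
          + n₂ * iotaC ((starRingEnd ℂ) z₂)) ↔
      Λ 1 = m₁ + n₁ ∧ Λ qi = (m₁ - n₁) * qi ∧ Λ qj = m₂ + n₂ ∧ Λ qk = (m₂ - n₂) * qi := by
  have hrhs (z₁ z₂ : ℂ) : m₁ * iotaC z₁ + m₂ * iotaC z₂ + n₁ * iotaC ((starRingEnd ℂ) z₁)
      + n₂ * iotaC ((starRingEnd ℂ) z₂) = z₁.re • (m₁ + n₁) + z₁.im • ((m₁ - n₁) * qi)
        + z₂.re • (m₂ + n₂) + z₂.im • ((m₂ - n₂) * qi) := by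
    rw [add_assoc (_ + _), add_add_add_comm, mul_iotaC_add_mul_iotaC_conj,
      mul_iotaC_add_mul_iotaC_conj, ← add_assoc]
  simp only [iotaC_add_iotaC_mul_qj, map_add, map_smul, hrhs]
  exact re_im_smul_eq_iff ..

lemma add_eq_and_sub_mul_eq_iff {R : Type*} [Ring R] [Algebra ℝ R] {u : R} (hu : u * u = -1)
    (m n a b : R) :
    (a = m + n ∧ b = (m - n) * u) ↔
      m = (1 / 2 : ℝ) • (a - b * u) ∧ n = (1 / 2 : ℝ) • (a + b * u) := by
  constructor
  · rintro ⟨rfl, rfl⟩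
    simp only [mul_assoc, hu, mul_neg, mul_one]
    constructor <;> module
  · rintro ⟨rfl, rfl⟩
    simp only [smul_mul_assoc, add_mul, sub_mul, mul_assoc, hu, mul_neg, mul_one]
    constructor <;> module

lemma add_mul_eq_zero_iff_of_mul_self_eq_neg_one {R : Type*} [Ring R] {u : R}
    (hu : u * u = -1) (a b : R) :
    a + b * u = 0 ↔ b = a * u := by
  constructor
  · intro h
    calc b = -(b * u * u) := by rw [mul_assoc, hu, mul_neg_one, neg_neg]
      _ = a * u := by rw [← neg_mul, ← eq_neg_of_add_eq_zero_left h]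
  · rintro rfl
    rw [mul_assoc, hu, mul_neg_one, add_neg_cancel]

lemma smul_fueter_sum_eq (A B C D : ℍ[ℝ]) :
    (1 / 4 : ℝ) • (A * 1 + B * qi + C * qj + D * qk)
      = (1 / 2 : ℝ) • ((1 / 2 : ℝ) • (A + B * qi) + (1 / 2 : ℝ) • (C + D * qi) * qj) := by
  rw [← qi_mul_qj]
  simp only [smul_mul_assoc, add_mul, mul_assoc, mul_one]
  module

/-- Every real linear map `Λ : ℍ → ℍ` admits unique `m₁, m₂, n₁, n₂ ∈ ℍ` with
`Λ(ι(z₁) + ι(z₂)j) = m₁ ι(z₁) + m₂ ι(z₂) + n₁ ι(z̄₁) + n₂ ι(z̄₂)`; moreover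
`(1/4)(Λ(1)·1 + Λ(i)·i + Λ(j)·j + Λ(k)·k) = (1/2)(n₁ + n₂ j)`, so `Λ` is regular iff
`n₂ = n₁ j`. -/
theorem stmt16 (Λ : ℍ[ℝ] →ₗ[ℝ] ℍ[ℝ]) :
    ∃ m₁ m₂ n₁ n₂ : ℍ[ℝ],
      (∀ z₁ z₂ : ℂ, Λ (iotaC z₁ + iotaC z₂ * qj)
        = m₁ * iotaC z₁ + m₂ * iotaC z₂ + n₁ * iotaC ((starRingEnd ℂ) z₁)
          + n₂ * iotaC ((starRingEnd ℂ) z₂)) ∧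
      (∀ m₁' m₂' n₁' n₂' : ℍ[ℝ],
        (∀ z₁ z₂ : ℂ, Λ (iotaC z₁ + iotaC z₂ * qj)
          = m₁' * iotaC z₁ + m₂' * iotaC z₂ + n₁' * iotaC ((starRingEnd ℂ) z₁)
            + n₂' * iotaC ((starRingEnd ℂ) z₂)) →
        m₁' = m₁ ∧ m₂' = m₂ ∧ n₁' = n₁ ∧ n₂' = n₂) ∧
      (1 / 4 : ℝ) • (Λ 1 * 1 + Λ qi * qi + Λ qj * qj + Λ qk * qk)
        = (1 / 2 : ℝ) • (n₁ + n₂ * qj) ∧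
      (IsReg Λ ↔ n₂ = n₁ * qj) := by
  have hsolve := add_eq_and_sub_mul_eq_iff qi_mul_qi
  have hrep := map_iotaC_add_iotaC_mul_qj_eq_iff Λ
  have hfueter := smul_fueter_sum_eq (Λ 1) (Λ qi) (Λ qj) (Λ qk)
  obtain ⟨h₁, h₂⟩ := (hsolve ((1 / 2 : ℝ) • (Λ 1 - Λ qi * qi)) _ (Λ 1) (Λ qi)).2 ⟨rfl, rfl⟩
  obtain ⟨h₃, h₄⟩ := (hsolve ((1 / 2 : ℝ) • (Λ qj - Λ qk * qi)) _ (Λ qj) (Λ qk)).2 ⟨rfl, rfl⟩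
  refine ⟨_, _, _, _, (hrep _ _ _ _).2 ⟨h₁, h₂, h₃, h₄⟩, fun m₁' m₂' n₁' n₂' h => ?_, hfueter, ?_⟩
  · obtain ⟨h₁', h₂', h₃', h₄'⟩ := (hrep _ _ _ _).1 h
    obtain ⟨rfl, rfl⟩ := (hsolve _ _ _ _).1 ⟨h₁', h₂'⟩
    obtain ⟨rfl, rfl⟩ := (hsolve _ _ _ _).1 ⟨h₃', h₄'⟩
    exact ⟨rfl, rfl, rfl, rfl⟩
  · rw [IsReg, ← add_mul_eq_zero_iff_of_mul_self_eq_neg_one qj_mul_qj,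
      ← smul_eq_zero_iff_right (by norm_num : (1 / 4 : ℝ) ≠ 0), hfueter,
      smul_eq_zero_iff_right (by norm_num)]

end
end

section
/- Let U ⊆ ℍ be an open set and let f : ℍ → ℍ be differentiable on U. Suppose there exists a map I : U → ℍ such that, for every p ∈ U, I(p)² = −1 and df_p(I(p)·v) = df_p(v)·I(p) for all v ∈ ℍ. Then f is right Fueter-regular on U, i.e., df_p(1)·1 + df_p(i)·i + df_p(j)·j + df_p(k)·k = 0 for every p ∈ U. -/
noncomputable section

open Quaternion Classical

/-! The sum `Σₑ Λ(e) e` over the basis `(1, i, j, k)` is the trace of the bilinear map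
`(x, y) ↦ Λ(x) y`, so it only picks up the factor `|u|²` when the basis is replaced by
`(u, u i, u j, u k)`. For `u = I` with `I² = -1` and `Λ(I v) = Λ(v) I`, every term
`Λ(I e)(I e) = Λ(e) I² e` is the negative of `Λ(e) e`, so the sum equals its own negative. -/

lemma normSq_eq_one_of_sq_eq_neg_one {u : ℍ[ℝ]} (hu : u ^ 2 = -1) : normSq u = 1 := by
  have h : normSq u ^ 2 = 1 := by rw [← map_pow, hu, normSq_neg, map_one]
  exact (pow_eq_one_iff_of_nonneg normSq_nonneg two_ne_zero).mp h

lemma expand_mul_basis (u : ℍ[ℝ]) :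
    u = u.re • 1 + u.imI • qi + u.imJ • qj + u.imK • qk ∧
    u * qi = (-u.imI) • 1 + u.re • qi + u.imK • qj + (-u.imJ) • qk ∧
    u * qj = (-u.imJ) • 1 + (-u.imK) • qi + u.re • qj + u.imI • qk ∧
    u * qk = (-u.imK) • 1 + u.imJ • qi + (-u.imI) • qj + u.re • qk := by
  refine ⟨?_, ?_, ?_, ?_⟩ <;> ext <;>
    simp [Quaternion.re_smul, Quaternion.re_mul, Quaternion.imI_mul, Quaternion.imJ_mul,
      Quaternion.imK_mul] <;> simp [qi, qj, qk]

theorem sum_diag_mul_left {M : Type*} [AddCommGroup M] [Module ℝ M]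
    (B : ℍ[ℝ] →ₗ[ℝ] ℍ[ℝ] →ₗ[ℝ] M) (u : ℍ[ℝ]) :
    B u u + B (u * qi) (u * qi) + B (u * qj) (u * qj) + B (u * qk) (u * qk)
      = normSq u • (B 1 1 + B qi qi + B qj qj + B qk qk) := by
  obtain ⟨hu, hi, hj, hk⟩ := expand_mul_basis u
  rw [hi, hj, hk, normSq_def']
  generalize u.re = r, u.imI = a, u.imJ = b, u.imK = c at *
  subst hu
  simp only [map_add, map_smul, LinearMap.add_apply, LinearMap.smul_apply]
  module

theorem isReg_of_isCLType {Λ : ℍ[ℝ] →ₗ[ℝ] ℍ[ℝ]} {u : ℍ[ℝ]} (hu : u ^ 2 = -1)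
    (hΛ : IsCLType Λ u u) : IsReg Λ := by
  have hterm : ∀ v, Λ (u * v) * (u * v) = -(Λ v * v) := fun v => by
    rw [hΛ v, mul_assoc, ← mul_assoc u, ← sq, hu, neg_one_mul, mul_neg]
  have hsum := sum_diag_mul_left ((LinearMap.mul ℝ ℍ[ℝ]).comp Λ) u
  simp only [LinearMap.comp_apply, LinearMap.mul_apply', normSq_eq_one_of_sq_eq_neg_one hu,
    one_smul] at hsum
  have h1 := hterm 1
  rw [mul_one] at h1
  rw [h1, hterm, hterm, hterm] at hsum
  have : IsAddTorsionFree ℍ[ℝ] := .of_module_rat _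
  unfold IsReg
  rw [← self_eq_neg]
  nth_rewrite 1 [← hsum]
  abel

theorem stmt18_general (U : Set ℍ[ℝ]) (f : ℍ[ℝ] → ℍ[ℝ]) (I : ℍ[ℝ] → ℍ[ℝ])
    (hI : ∀ p ∈ U, I p ^ 2 = -1 ∧ ∀ v, fderiv ℝ f p (I p * v) = fderiv ℝ f p v * I p) :
    ∀ p ∈ U, fderiv ℝ f p 1 * 1 + fderiv ℝ f p qi * qi
      + fderiv ℝ f p qj * qj + fderiv ℝ f p qk * qk = 0 :=
  fun p hp => isReg_of_isCLType (Λ := (fderiv ℝ f p : ℍ[ℝ] →ₗ[ℝ] ℍ[ℝ])) (hI p hp).1 (hI p hp).2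

/-- If `f` is differentiable on an open set `U` and there is `I : U → 𝕊` with
`df_p(I(p)v) = df_p(v)I(p)` for all `p ∈ U` and `v ∈ ℍ`, then `f` is right
Fueter-regular on `U`. -/
theorem stmt18 (U : Set ℍ[ℝ]) (hU : IsOpen U) (f : ℍ[ℝ] → ℍ[ℝ])
    (hdiff : ∀ p ∈ U, DifferentiableAt ℝ f p) (I : ℍ[ℝ] → ℍ[ℝ])
    (hI : ∀ p ∈ U, I p ^ 2 = -1 ∧ ∀ v, fderiv ℝ f p (I p * v) = fderiv ℝ f p v * I p) :
    ∀ p ∈ U, fderiv ℝ f p 1 * 1 + fderiv ℝ f p qi * qi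
      + fderiv ℝ f p qj * qj + fderiv ℝ f p qk * qk = 0 :=
  stmt18_general U f I hI

end
end
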